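/- (Stone–von Neumann theorem for the finite Heisenberg group.) Let H be a nonzero complex Hilbert space and let ρ : H(ℤ_N^g) → U(H) be a unitary representation such that ρ(class of (0,0,1)) = e^{πi/N}·id_H and such that ρ is irreducible, i.e., the only closed subspaces of H invariant under ρ(u) for all u ∈ H(ℤ_N^g) are {0} and H. Then ρ is unitarily equivalent to the Schrödinger representation: there exists a unitary isomorphism U : H → V such that U ∘ ρ(u) ∘ U⁻¹ = σ̄(u) for all u ∈ H(ℤ_N^g), where σ̄ : H(ℤ_N^g) → U(V) is the Schrödinger representation, i.e., the homomorphism induced on the quotient H(ℤ_N^g) = H(ℤ^g)/Γ_N by (p,q,k) ↦ e^{kπi/N} O_{pq}. -/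

import Mathlib

open Finset

/-- The underlying `ℤ^g × ℤ^g` of the Heisenberg group. -/
abbrev HVec (g : ℕ) := (Fin g → ℤ) × (Fin g → ℤ)

/-- The standard symplectic form `ω((p,q),(p',q')) = Σⱼ (pⱼ q'ⱼ − qⱼ p'ⱼ)`. -/
def symp (g : ℕ) (x y : HVec g) : ℤ := ∑ j, (x.1 j * y.2 j - x.2 j * y.1 j)

lemma symp_add_left (g : ℕ) (x y z : HVec g) :
    symp g (x + y) z = symp g x z + symp g y z := by
  simp only [symp, Prod.fst_add, Prod.snd_add, Pi.add_apply]
  rw [← Finset.sum_add_distrib]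
  exact Finset.sum_congr rfl fun j _ => by ring

lemma symp_add_right (g : ℕ) (x y z : HVec g) :
    symp g x (y + z) = symp g x y + symp g x z := by
  simp only [symp, Prod.fst_add, Prod.snd_add, Pi.add_apply]
  rw [← Finset.sum_add_distrib]
  exact Finset.sum_congr rfl fun j _ => by ring

lemma symp_zero_left (g : ℕ) (y : HVec g) : symp g 0 y = 0 := by
  simp [symp]

lemma symp_zero_right (g : ℕ) (x : HVec g) : symp g x 0 = 0 := by
  simp [symp]

lemma symp_neg_left (g : ℕ) (x y : HVec g) : symp g (-x) y = - symp g x y := by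
  simp only [symp, Prod.fst_neg, Prod.snd_neg, Pi.neg_apply, ← Finset.sum_neg_distrib]
  exact Finset.sum_congr rfl fun j _ => by ring

lemma symp_neg_right (g : ℕ) (x y : HVec g) : symp g x (-y) = - symp g x y := by
  simp only [symp, Prod.fst_neg, Prod.snd_neg, Pi.neg_apply, ← Finset.sum_neg_distrib]
  exact Finset.sum_congr rfl fun j _ => by ring

lemma symp_self (g : ℕ) (x : HVec g) : symp g x x = 0 :=
  Finset.sum_eq_zero fun j _ => by ring

lemma symp_skew (g : ℕ) (x y : HVec g) : symp g x y = - symp g y x := by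
  simp only [symp, ← Finset.sum_neg_distrib]
  exact Finset.sum_congr rfl fun j _ => by ring

lemma symp_smul_left (g : ℕ) (c : ℤ) (x y : HVec g) :
    symp g (c • x) y = c * symp g x y := by
  simp only [symp, Prod.smul_fst, Prod.smul_snd, Pi.smul_apply, smul_eq_mul, Finset.mul_sum]
  exact Finset.sum_congr rfl fun j _ => by ring

lemma symp_smul_right (g : ℕ) (c : ℤ) (x y : HVec g) :
    symp g x (c • y) = c * symp g x y := by
  simp only [symp, Prod.smul_fst, Prod.smul_snd, Pi.smul_apply, smul_eq_mul, Finset.mul_sum]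
  exact Finset.sum_congr rfl fun j _ => by ring

/-- The integral Heisenberg group `H(ℤ^g) = ℤ^g × ℤ^g × ℤ`. -/
def Heis (g : ℕ) := HVec g × ℤ

namespace Heis

variable {g : ℕ}

instance : Mul (Heis g) := ⟨fun a b => (a.1 + b.1, a.2 + b.2 + symp g a.1 b.1)⟩
instance : One (Heis g) := ⟨((0 : HVec g), (0 : ℤ))⟩
instance : Inv (Heis g) := ⟨fun a => (-a.1, -a.2)⟩

lemma mul_def (a b : Heis g) : a * b = (a.1 + b.1, a.2 + b.2 + symp g a.1 b.1) := rfl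
lemma one_def : (1 : Heis g) = ((0 : HVec g), (0 : ℤ)) := rfl
lemma inv_def (a : Heis g) : a⁻¹ = (-a.1, -a.2) := rfl

instance : Group (Heis g) where
  mul_assoc a b c := by
    show ((a.1 + b.1) + c.1, (a.2 + b.2 + symp g a.1 b.1) + c.2 + symp g (a.1 + b.1) c.1)
      = (a.1 + (b.1 + c.1), a.2 + (b.2 + c.2 + symp g b.1 c.1) + symp g a.1 (b.1 + c.1))
    refine Prod.ext ?_ ?_
    · exact add_assoc _ _ _
    · simp only [symp_add_left, symp_add_right]
      ring
  one_mul a := by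
    show ((0 : HVec g) + a.1, (0 : ℤ) + a.2 + symp g 0 a.1) = a
    rw [symp_zero_left]
    exact Prod.ext (zero_add _) (by simp)
  mul_one a := by
    show (a.1 + (0 : HVec g), a.2 + (0 : ℤ) + symp g a.1 0) = a
    rw [symp_zero_right]
    exact Prod.ext (add_zero _) (by simp)
  inv_mul_cancel a := by
    show (-a.1 + a.1, -a.2 + a.2 + symp g (-a.1) a.1) = ((0 : HVec g), (0 : ℤ))
    rw [symp_neg_left, symp_self]
    simp

end Heis

/-- The normal subgroup `Γ_N = {(Np, Nq, 2Nk)}` of `H(ℤ^g)`. -/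
def GammaN (g N : ℕ) (hN : Even N) : Subgroup (Heis g) where
  carrier := {a | (∃ x : HVec g, a.1 = (N : ℤ) • x) ∧ ∃ k : ℤ, a.2 = 2 * N * k}
  one_mem' := ⟨⟨0, by simp [Heis.one_def]⟩, 0, by simp [Heis.one_def]⟩
  mul_mem' := by
    rintro a b ⟨⟨x, hx⟩, k, hk⟩ ⟨⟨y, hy⟩, l, hl⟩
    obtain ⟨m, hm⟩ := hN
    have hNm : (N : ℤ) = m + m := by exact_mod_cast hm
    refine ⟨⟨x + y, ?_⟩, k + l + m * symp g x y, ?_⟩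
    · simp [Heis.mul_def, hx, hy, smul_add]
    · simp only [Heis.mul_def, hx, hy, hk, hl, symp_smul_left, symp_smul_right]
      rw [hNm]; ring
  inv_mem' := by
    rintro a ⟨⟨x, hx⟩, k, hk⟩
    exact ⟨⟨-x, by simp [Heis.inv_def, hx]⟩, -k, by simp [Heis.inv_def, hk]⟩

instance gammaN_normal (g N : ℕ) (hN : Even N) : (GammaN g N hN).Normal := by
  constructor
  intro n hn x
  obtain ⟨⟨y, hy⟩, k, hk⟩ := hn
  refine ⟨⟨y, ?_⟩, k + symp g x.1 y, ?_⟩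
  · show x.1 + n.1 + -x.1 = (N : ℤ) • y
    rw [hy]; abel
  · show x.2 + n.2 + symp g x.1 n.1 + -x.2 + symp g (x.1 + n.1) (-x.1) = 2 * N * (k + symp g x.1 y)
    simp only [hy, hk, symp_add_left, symp_neg_right, symp_self,
      symp_smul_left, symp_smul_right]
    have h1 : symp g y x.1 = - symp g x.1 y := symp_skew g y x.1
    rw [h1]; ring

noncomputable section

/-- The Hilbert space `V` of functions `(ℤ_N)^g → ℂ` with its standard inner product. -/
abbrev ThetaSp (g N : ℕ) [NeZero N] := EuclideanSpace ℂ (Fin g → ZMod N)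

/-- The standard orthonormal basis `(e_μ)` of `V`, `μ ∈ (ℤ_N)^g`,
with `e_μ = EuclideanSpace.single μ 1`. -/
def thetaBasis (g N : ℕ) [NeZero N] : Module.Basis (Fin g → ZMod N) ℂ (ThetaSp g N) :=
  (EuclideanSpace.basisFun (Fin g → ZMod N) ℂ).toBasis

/-- The coefficient `exp(−(πi/N) pᵀq − (2πi/N) μᵀq)`, where `μᵀq` is computed using the
canonical lift `ZMod.val` of `μ` to `ℤ^g`. -/
def schCoeff (g N : ℕ) [NeZero N] (p q : Fin g → ℤ) (μ : Fin g → ZMod N) : ℂ :=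
  Complex.exp (-((Real.pi : ℂ) * Complex.I / N) * (∑ j, (p j : ℂ) * (q j : ℂ))
    - (2 * (Real.pi : ℂ) * Complex.I / N) * (∑ j, ((μ j).val : ℂ) * (q j : ℂ)))

/-- The operator `O_{pq}` on `V`, determined by its action on the standard basis:
`O_{pq} e_μ = exp(−(πi/N) pᵀq − (2πi/N) μᵀq) • e_{μ+p}`. -/
def Opq (g N : ℕ) [NeZero N] (p q : Fin g → ℤ) : ThetaSp g N →L[ℂ] ThetaSp g N :=
  LinearMap.toContinuousLinearMap <|
    (thetaBasis g N).constr ℂ fun μ =>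
      schCoeff g N p q μ • EuclideanSpace.single (μ + fun j => ((p j : ZMod N))) (1 : ℂ)

/-!
Write `S_p = ρ(p,0,0)` and `T_q = ρ(0,q,0)`. Both depend only on `p, q mod N`, the centre acts by
the scalars `e^{kπi/N}`, and `T_q S_p = e^{-2πi p·q/N} S_p T_q`. Let `P` be the average of the
`T_q` over `q ∈ (ℤ/N)^g`; then `T_q P = P`, and by orthogonality of characters
`∑_p S_p P S_{-p} = 1`, so `P ≠ 0` and some unit vector `v` is fixed by every `T_q`.
The vectors `v_μ = S_μ v` are eigenvectors of the unitaries `T_q` for pairwise different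
characters, hence orthonormal, and `ρ(p,q,k)` maps `v_μ` to a multiple of `v_{μ+p}`. Their span is
a nonzero finite-dimensional, hence closed, invariant subspace, so it is all of `H` by
irreducibility, and `v_μ ↦ e_μ` is the required unitary: the multiples are exactly the
coefficients of `e^{kπi/N} O_{pq}`.
-/

open Complex Matrix
open scoped Real

theorem AddChar.sum_apply_dotProduct {ι R R' : Type*} [Fintype ι] [DecidableEq ι] [CommRing R]
    [Fintype R] [DecidableEq R] [CommRing R'] [IsDomain R'] {ψ : AddChar R R'}
    (hψ : ψ.IsPrimitive) (q : ι → R) :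
    ∑ p : ι → R, ψ (p ⬝ᵥ q) = if q = 0 then (Fintype.card R : R') ^ Fintype.card ι else 0 := by
  have hψ_sum (f : ι → R) : ψ (∑ i, f i) = ∏ i, ψ (f i) :=
    map_sum ψ.toAddMonoidHom f Finset.univ
  calc ∑ p : ι → R, ψ (p ⬝ᵥ q) = ∏ j, ∑ x : R, ψ (x * q j) := by
        simp only [dotProduct, hψ_sum, Finset.prod_univ_sum, Fintype.piFinset_univ]
    _ = _ := by
        simp only [AddChar.sum_mulShift _ hψ, Nat.cast_ite, Nat.cast_zero, Fintype.prod_ite_zero,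
          Finset.prod_const, Finset.card_univ, funext_iff, Pi.zero_apply]

theorem Unitary.inner_eq_zero_of_apply_eq_smul {𝕜 E : Type*} [RCLike 𝕜] [NormedAddCommGroup E]
    [InnerProductSpace 𝕜 E] [CompleteSpace E] (u : unitary (E →L[𝕜] E)) {a b : 𝕜} {x y : E}
    (ha : ‖a‖ = 1) (hab : a ≠ b) (hx : (u : E →L[𝕜] E) x = a • x)
    (hy : (u : E →L[𝕜] E) y = b • y) : inner 𝕜 x y = 0 := by
  have h := Unitary.inner_map_map u x y
  rw [hx, hy, inner_smul_left, inner_smul_right, ← mul_assoc] at h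
  by_contra hxy
  have hconj : (starRingEnd 𝕜) a * b = 1 := (mul_eq_right₀ hxy).mp h
  apply hab
  calc a = a * ((starRingEnd 𝕜) a * b) := by rw [hconj, mul_one]
    _ = b := by rw [← mul_assoc, RCLike.mul_conj, ha]; simp

namespace Heis

variable {g : ℕ}

lemma ext {a b : Heis g} (h₁ : a.1 = b.1) (h₂ : a.2 = b.2) : a = b := Prod.ext h₁ h₂

lemma mul_fst (a b : Heis g) : (a * b).1 = a.1 + b.1 := rfl

lemma mul_snd (a b : Heis g) : (a * b).2 = a.2 + b.2 + symp g a.1 b.1 := rfl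

def mk (p q : Fin g → ℤ) (k : ℤ) : Heis g := ((p, q), k)

def central (m : ℤ) : Heis g := mk 0 0 m

def ofP (p : Fin g → ℤ) : Heis g := mk p 0 0

def ofQ (q : Fin g → ℤ) : Heis g := mk 0 q 0

lemma central_add (m n : ℤ) : (central (m + n) : Heis g) = central m * central n := by
  apply ext <;> simp only [mul_fst, mul_snd] <;> simp [central, mk, symp]

lemma ofP_add (p p' : Fin g → ℤ) : (ofP (p + p') : Heis g) = ofP p * ofP p' := by
  apply ext <;> simp only [mul_fst, mul_snd] <;> simp [ofP, mk, symp]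

lemma ofQ_add (q q' : Fin g → ℤ) : (ofQ (q + q') : Heis g) = ofQ q * ofQ q' := by
  apply ext <;> simp only [mul_fst, mul_snd] <;> simp [ofQ, mk, symp]

lemma ofP_zero : (ofP 0 : Heis g) = 1 := rfl

lemma ofQ_zero : (ofQ 0 : Heis g) = 1 := rfl

lemma central_mul_ofQ_mul_ofP (p q : Fin g → ℤ) (k : ℤ) :
    central (k + p ⬝ᵥ q) * (ofQ q * ofP p) = mk p q k := by
  apply ext <;> simp only [mul_fst, mul_snd] <;>
    simp [central, ofP, ofQ, mk, symp, dotProduct, mul_comm]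

lemma ofQ_mul_ofP (p q : Fin g → ℤ) :
    (ofQ q * ofP p : Heis g) = central (-2 * (p ⬝ᵥ q)) * (ofP p * ofQ q) := by
  apply ext <;> simp only [mul_fst, mul_snd]
  · simp [central, ofP, ofQ, mk]
  · simp [central, ofP, ofQ, mk, symp, dotProduct, mul_comm]
    ring

end Heis

namespace StoneVonNeumann

def expPiDiv (N : ℕ) (m : ℤ) : ℂ := exp (m * π * I / N)

lemma expPiDiv_add (N : ℕ) (m n : ℤ) : expPiDiv N (m + n) = expPiDiv N m * expPiDiv N n := by
  rw [expPiDiv, expPiDiv, expPiDiv, ← exp_add]; push_cast; ring_nf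

lemma expPiDiv_zero (N : ℕ) : expPiDiv N 0 = 1 := by simp [expPiDiv]

lemma expPiDiv_ne_zero (N : ℕ) (m : ℤ) : expPiDiv N m ≠ 0 := exp_ne_zero _

lemma expPiDiv_two_mul (N : ℕ) [NeZero N] (m : ℤ) :
    expPiDiv N (2 * m) = ZMod.stdAddChar (m : ZMod N) := by
  rw [ZMod.stdAddChar_coe, expPiDiv]; push_cast; ring_nf

def castVec {g : ℕ} (N : ℕ) (p : Fin g → ℤ) : Fin g → ZMod N := fun j => (p j : ZMod N)

def valVec {g N : ℕ} (μ : Fin g → ZMod N) : Fin g → ℤ := fun j => ((μ j).val : ℤ)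

@[simp]
lemma castVec_valVec {g N : ℕ} [NeZero N] (μ : Fin g → ZMod N) : castVec N (valVec μ) = μ := by
  funext j; simp [castVec, valVec]

lemma valVec_zero {g N : ℕ} [NeZero N] : valVec (0 : Fin g → ZMod N) = 0 := by
  funext j; simp [valVec]

@[simp]
lemma castVec_zero {g : ℕ} (N : ℕ) : castVec N (0 : Fin g → ℤ) = 0 := by
  funext j; simp [castVec]

@[simp]
lemma castVec_add {g : ℕ} (N : ℕ) (p p' : Fin g → ℤ) :
    castVec N (p + p') = castVec N p + castVec N p' := by
  funext j; simp [castVec]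

@[simp]
lemma castVec_neg {g : ℕ} (N : ℕ) (p : Fin g → ℤ) : castVec N (-p) = -castVec N p := by
  funext j; simp [castVec]

@[simp]
lemma castVec_single {g : ℕ} (N : ℕ) (j : Fin g) (m : ℤ) :
    castVec N (Pi.single j m) = Pi.single j (m : ZMod N) := by
  funext i; by_cases h : i = j <;> simp [castVec, h]

lemma castVec_dotProduct {g : ℕ} (N : ℕ) (p q : Fin g → ℤ) :
    castVec N p ⬝ᵥ castVec N q = ((p ⬝ᵥ q : ℤ) : ZMod N) := by
  simp [castVec, dotProduct]

lemma Opq_single {g N : ℕ} [NeZero N] (p q : Fin g → ℤ) (μ : Fin g → ZMod N) :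
    Opq g N p q (EuclideanSpace.single μ 1) =
      schCoeff g N p q μ • EuclideanSpace.single (μ + castVec N p) 1 := by
  have hθ : thetaBasis g N μ = EuclideanSpace.single μ 1 := by
    rw [thetaBasis, OrthonormalBasis.coe_toBasis, EuclideanSpace.basisFun_apply]
  rw [Opq, LinearMap.coe_toContinuousLinearMap', ← hθ, Module.Basis.constr_basis]
  rfl

lemma expPiDiv_mul_stdAddChar {g N : ℕ} [NeZero N] (p q : Fin g → ℤ) (k : ℤ) (μ : Fin g → ZMod N) :
    expPiDiv N (k + p ⬝ᵥ q) * ZMod.stdAddChar (-((μ + castVec N p) ⬝ᵥ castVec N q)) =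
      expPiDiv N k * schCoeff g N p q μ := by
  have h : -((μ + castVec N p) ⬝ᵥ castVec N q) = ((-(valVec μ ⬝ᵥ q) - p ⬝ᵥ q : ℤ) : ZMod N) := by
    push_cast [← castVec_dotProduct, castVec_valVec, add_dotProduct]
    ring
  rw [h, ← expPiDiv_two_mul, ← expPiDiv_add, expPiDiv, expPiDiv, schCoeff, ← Complex.exp_add]
  congr 1
  push_cast [dotProduct, valVec]
  ring

lemma exists_eq_smul_of_castVec_eq_zero {g N : ℕ} {p : Fin g → ℤ} (hp : castVec N p = 0) :
    ∃ x : Fin g → ℤ, p = (N : ℤ) • x :=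
  ⟨fun j => p j / N, funext fun j => (Int.mul_ediv_cancel'
    ((ZMod.intCast_zmod_eq_zero_iff_dvd _ _).mp (congrFun hp j))).symm⟩

lemma mk_mem_gammaN {g N : ℕ} (hN : Even N) {p q : Fin g → ℤ} (hp : castVec N p = 0)
    (hq : castVec N q = 0) : Heis.mk p q 0 ∈ GammaN g N hN := by
  obtain ⟨x, rfl⟩ := exists_eq_smul_of_castVec_eq_zero hp
  obtain ⟨y, rfl⟩ := exists_eq_smul_of_castVec_eq_zero hq
  exact ⟨⟨(x, y), rfl⟩, 0, rfl⟩

open Heis (central ofP ofQ)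

variable {g N : ℕ} {hN : Even N}
  {H : Type*} [NormedAddCommGroup H] [InnerProductSpace ℂ H] [CompleteSpace H]
  (ρ : Heis g ⧸ GammaN g N hN →* unitary (H →L[ℂ] H))

def repOp (a : Heis g) : H →L[ℂ] H := ρ a

lemma repOp_mul (a b : Heis g) : repOp ρ (a * b) = repOp ρ a * repOp ρ b := by
  simp [repOp]

lemma repOp_one : repOp ρ 1 = 1 := by
  simp [repOp]

lemma repOp_mul_apply (a b : Heis g) (x : H) :
    repOp ρ (a * b) x = repOp ρ a (repOp ρ b x) := by
  rw [repOp_mul]; rfl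

lemma repOp_of_mem {a : Heis g} (ha : a ∈ GammaN g N hN) : repOp ρ a = 1 := by
  simp [repOp, (QuotientGroup.eq_one_iff a).mpr ha]

lemma repOp_ofP_congr {p p' : Fin g → ℤ} (h : castVec N p = castVec N p') :
    repOp ρ (ofP p) = repOp ρ (ofP p') := by
  have hmem : ofP (p' - p) ∈ GammaN g N hN :=
    mk_mem_gammaN hN (by simp [sub_eq_add_neg, h]) (castVec_zero N)
  rw [← sub_add_cancel p' p, Heis.ofP_add, repOp_mul, repOp_of_mem ρ hmem, one_mul]

lemma repOp_ofQ_congr {q q' : Fin g → ℤ} (h : castVec N q = castVec N q') :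
    repOp ρ (ofQ q) = repOp ρ (ofQ q') := by
  have hmem : ofQ (q' - q) ∈ GammaN g N hN :=
    mk_mem_gammaN hN (castVec_zero N) (by simp [sub_eq_add_neg, h])
  rw [← sub_add_cancel q' q, Heis.ofQ_add, repOp_mul, repOp_of_mem ρ hmem, one_mul]

lemma repOp_central (hcen : repOp ρ (central 1) = expPiDiv N 1 • 1) (m : ℤ) :
    repOp ρ (central m) = expPiDiv N m • 1 := by
  have step (m : ℤ) : repOp ρ (central (m + 1)) = expPiDiv N 1 • repOp ρ (central m) := by
    rw [Heis.central_add, repOp_mul, hcen, mul_smul_comm, mul_one]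
  induction m using Int.induction_on with
  | zero => rw [expPiDiv_zero, one_smul]; exact repOp_one ρ
  | succ i ih => rw [step, ih, smul_smul, ← expPiDiv_add, add_comm]
  | pred i ih =>
    refine smul_right_injective _ (expPiDiv_ne_zero N 1) ?_
    dsimp only
    rw [← step, sub_add_cancel, ih]
    simp only [smul_smul, ← expPiDiv_add, add_sub_cancel]

variable [NeZero N]

def qAverage : H →L[ℂ] H :=
  ((N : ℂ) ^ g)⁻¹ • ∑ q : Fin g → ZMod N, repOp ρ (ofQ (valVec q))

lemma repOp_ofQ_mul_qAverage (q₀ : Fin g → ℤ) : repOp ρ (ofQ q₀) * qAverage ρ = qAverage ρ := by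
  rw [qAverage, mul_smul_comm, Finset.mul_sum]
  congr 1
  calc ∑ q : Fin g → ZMod N, repOp ρ (ofQ q₀) * repOp ρ (ofQ (valVec q))
      = ∑ q : Fin g → ZMod N, repOp ρ (ofQ (valVec (castVec N q₀ + q))) := by
        refine Finset.sum_congr rfl fun q _ => ?_
        rw [← repOp_mul, ← Heis.ofQ_add]
        exact repOp_ofQ_congr ρ (by simp)
    _ = ∑ q : Fin g → ZMod N, repOp ρ (ofQ (valVec q)) :=
        Fintype.sum_equiv (Equiv.addLeft (castVec N q₀)) _ _ fun _ => rfl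

def basisVec (v : H) (μ : Fin g → ZMod N) : H := repOp ρ (ofP (valVec μ)) v

lemma repOp_ofP_basisVec (v : H) (p : Fin g → ℤ) (μ : Fin g → ZMod N) :
    repOp ρ (ofP p) (basisVec ρ v μ) = basisVec ρ v (μ + castVec N p) := by
  rw [basisVec, basisVec, ← repOp_mul_apply, ← Heis.ofP_add,
    repOp_ofP_congr ρ (p' := valVec (μ + castVec N p)) (by simp [add_comm])]

section central

variable (hcen : repOp ρ (central 1) = expPiDiv N 1 • 1)
include hcen

lemma repOp_ofQ_mul_ofP (p q : Fin g → ℤ) :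
    repOp ρ (ofQ q) * repOp ρ (ofP p) =
      ZMod.stdAddChar (-(castVec N p ⬝ᵥ castVec N q)) • (repOp ρ (ofP p) * repOp ρ (ofQ q)) := by
  rw [← repOp_mul, Heis.ofQ_mul_ofP, repOp_mul, repOp_central ρ hcen, smul_mul_assoc, one_mul,
    repOp_mul, castVec_dotProduct, ← Int.cast_neg, ← expPiDiv_two_mul, mul_neg, neg_mul]

lemma repOp_ofP_mul_ofQ_mul_ofP_neg (p q : Fin g → ℤ) :
    repOp ρ (ofP p) * repOp ρ (ofQ q) * repOp ρ (ofP (-p)) =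
      ZMod.stdAddChar (castVec N p ⬝ᵥ castVec N q) • repOp ρ (ofQ q) := by
  rw [mul_assoc, repOp_ofQ_mul_ofP ρ hcen, castVec_neg, neg_dotProduct, neg_neg, mul_smul_comm,
    ← mul_assoc, ← repOp_mul, ← Heis.ofP_add, add_neg_cancel, Heis.ofP_zero, repOp_one, one_mul]

lemma sum_repOp_ofP_mul_qAverage_mul :
    ∑ p : Fin g → ZMod N, repOp ρ (ofP (valVec p)) * qAverage ρ * repOp ρ (ofP (-valVec p)) =
      1 := by
  have hNg : ((N : ℂ) ^ g) ≠ 0 := pow_ne_zero _ (NeZero.ne _)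
  simp only [qAverage, mul_smul_comm, smul_mul_assoc, Finset.mul_sum, Finset.sum_mul,
    repOp_ofP_mul_ofQ_mul_ofP_neg ρ hcen, castVec_valVec, ← Finset.smul_sum]
  rw [Finset.sum_comm]
  simp only [← Finset.sum_smul, AddChar.sum_apply_dotProduct (ZMod.isPrimitive_stdAddChar N),
    ite_smul, zero_smul, Finset.sum_ite_eq', Finset.mem_univ, if_true, ZMod.card, Fintype.card_fin]
  rw [valVec_zero, Heis.ofQ_zero, repOp_one, smul_smul, inv_mul_cancel₀ hNg, one_smul]

lemma exists_norm_eq_one_forall_repOp_ofQ_apply_eq [Nontrivial H] :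
    ∃ v : H, ‖v‖ = 1 ∧ ∀ q, repOp ρ (ofQ q) v = v := by
  obtain ⟨x, hx⟩ := exists_ne (0 : H)
  have hsum : ∑ p : Fin g → ZMod N,
      repOp ρ (ofP (valVec p)) (qAverage ρ (repOp ρ (ofP (-valVec p)) x)) = x := by
    simpa using congr($(sum_repOp_ofP_mul_qAverage_mul ρ hcen) x)
  obtain ⟨p, -, hp⟩ := Finset.exists_ne_zero_of_sum_ne_zero (hsum ▸ hx)
  set y := qAverage ρ (repOp ρ (ofP (-valVec p)) x)
  have hy : y ≠ 0 := fun h => hp (by rw [h, map_zero])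
  have hfix (q : Fin g → ℤ) : repOp ρ (ofQ q) y = y := congr($(repOp_ofQ_mul_qAverage ρ q) _)
  exact ⟨(‖y‖⁻¹ : ℂ) • y, norm_smul_inv_norm hy, fun q => by rw [map_smul, hfix]⟩

variable {v : H} (hv : ∀ q, repOp ρ (ofQ q) v = v)
include hv

lemma repOp_ofQ_basisVec (q : Fin g → ℤ) (μ : Fin g → ZMod N) :
    repOp ρ (ofQ q) (basisVec ρ v μ) = ZMod.stdAddChar (-(μ ⬝ᵥ castVec N q)) • basisVec ρ v μ := by
  rw [basisVec, ← mul_apply_eq_comp, repOp_ofQ_mul_ofP ρ hcen,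
    _root_.smul_apply, mul_apply_eq_comp, hv, castVec_valVec]

lemma repOp_mk_basisVec (p q : Fin g → ℤ) (k : ℤ) (μ : Fin g → ZMod N) :
    repOp ρ (Heis.mk p q k) (basisVec ρ v μ) =
      (expPiDiv N (k + p ⬝ᵥ q) * ZMod.stdAddChar (-((μ + castVec N p) ⬝ᵥ castVec N q))) •
        basisVec ρ v (μ + castVec N p) := by
  rw [← Heis.central_mul_ofQ_mul_ofP, repOp_mul_apply, repOp_mul_apply, repOp_ofP_basisVec,
    repOp_ofQ_basisVec ρ hcen hv, repOp_central ρ hcen, _root_.smul_apply,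
    one_apply_eq_self, smul_smul]

lemma orthonormal_basisVec (hv₁ : ‖v‖ = 1) : Orthonormal ℂ (basisVec ρ v) := by
  refine ⟨fun μ => by rw [basisVec, repOp, Unitary.norm_map, hv₁], fun μ ν hμν => ?_⟩
  obtain ⟨j, hj⟩ := Function.ne_iff.mp hμν
  have hsingle (κ : Fin g → ZMod N) : κ ⬝ᵥ castVec N (Pi.single j 1) = κ j := by simp
  refine Unitary.inner_eq_zero_of_apply_eq_smul (ρ (ofQ (Pi.single j 1)))
    (a := ZMod.stdAddChar (-μ j)) (b := ZMod.stdAddChar (-ν j)) (Circle.norm_coe _)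
    (fun h => hj (neg_injective (ZMod.injective_stdAddChar h)))
    ((repOp_ofQ_basisVec ρ hcen hv _ μ).trans (by rw [hsingle]))
    ((repOp_ofQ_basisVec ρ hcen hv _ ν).trans (by rw [hsingle]))

lemma span_basisVec_eq_top (hv₁ : ‖v‖ = 1)
    (hirr : ∀ W : Submodule ℂ H, IsClosed (W : Set H) →
      (∀ (u : Heis g ⧸ GammaN g N hN) (x : H), x ∈ W → (ρ u : H →L[ℂ] H) x ∈ W) →
      W = ⊥ ∨ W = ⊤) :
    Submodule.span ℂ (Set.range (basisVec ρ v)) = ⊤ := by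
  set W := Submodule.span ℂ (Set.range (basisVec ρ v))
  have : FiniteDimensional ℂ W := FiniteDimensional.span_of_finite ℂ (Set.finite_range _)
  refine (hirr W W.closed_of_finiteDimensional ?_).resolve_left fun hW => ?_
  · intro u x hx
    obtain ⟨⟨⟨p, q⟩, k⟩, rfl⟩ := QuotientGroup.mk_surjective u
    refine (Submodule.span_le.mpr ?_ : W ≤ W.comap (repOp ρ (Heis.mk p q k) : H →ₗ[ℂ] H)) hx
    rintro _ ⟨μ, rfl⟩
    rw [SetLike.mem_coe, Submodule.mem_comap, ContinuousLinearMap.coe_coe,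
      repOp_mk_basisVec ρ hcen hv]
    exact W.smul_mem _ (Submodule.subset_span ⟨_, rfl⟩)
  · have h0 : basisVec ρ v 0 ∈ W := Submodule.subset_span ⟨0, rfl⟩
    rw [hW, Submodule.mem_bot] at h0
    exact (orthonormal_basisVec ρ hcen hv hv₁).ne_zero 0 h0

end central

end StoneVonNeumann

open StoneVonNeumann

/-- **Stone–von Neumann theorem for the finite Heisenberg group.**  Any irreducible unitary
representation of `H(ℤ_N^g)` in which the central element `(0,0,1)` acts as multiplication by
`e^{πi/N}` is unitarily equivalent to the Schrödinger representation
`(p,q,k) ↦ e^{kπi/N} O_{pq}`. -/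
theorem stmt_2 (g N : ℕ) [NeZero N] (hN : Even N)
    (H : Type) [NormedAddCommGroup H] [InnerProductSpace ℂ H] [CompleteSpace H] [Nontrivial H]
    (ρ : (Heis g ⧸ GammaN g N hN) →* unitary (H →L[ℂ] H))
    (hcen : ((ρ (QuotientGroup.mk (((0 : Fin g → ℤ), (0 : Fin g → ℤ)), (1 : ℤ))) :
        H →L[ℂ] H)) = Complex.exp ((Real.pi : ℂ) * Complex.I / N) • 1)
    (hirr : ∀ W : Submodule ℂ H, IsClosed (W : Set H) →
        (∀ (u : Heis g ⧸ GammaN g N hN) (x : H), x ∈ W → (ρ u : H →L[ℂ] H) x ∈ W) →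
        W = ⊥ ∨ W = ⊤) :
    ∃ U : H ≃ₗᵢ[ℂ] ThetaSp g N,
      ∀ (p q : Fin g → ℤ) (k : ℤ) (x : H),
        U ((ρ (QuotientGroup.mk ((p, q), k)) : H →L[ℂ] H) x)
          = Complex.exp ((k : ℂ) * (Real.pi : ℂ) * Complex.I / N) • Opq g N p q (U x) := by
  have hcen' : repOp ρ (Heis.central 1) = expPiDiv N 1 • 1 := by
    rw [expPiDiv, Int.cast_one, one_mul]; exact hcen
  obtain ⟨v, hv₁, hv⟩ := exists_norm_eq_one_forall_repOp_ofQ_apply_eq ρ hcen'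
  let b := OrthonormalBasis.mk (orthonormal_basisVec ρ hcen' hv hv₁)
    (span_basisVec_eq_top ρ hcen' hv hv₁ hirr).ge
  have hb : ⇑b = basisVec ρ v := OrthonormalBasis.coe_mk _ _
  have hrepr (μ : Fin g → ZMod N) : b.repr (basisVec ρ v μ) = EuclideanSpace.single μ 1 := by
    rw [← hb, b.repr_self]
  refine ⟨b.repr, fun p q k x => ?_⟩
  suffices b.repr.toLinearMap ∘ₗ (repOp ρ (Heis.mk p q k) : H →ₗ[ℂ] H) =
      expPiDiv N k • ((Opq g N p q : ThetaSp g N →ₗ[ℂ] ThetaSp g N) ∘ₗ b.repr.toLinearMap) from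
    LinearMap.congr_fun this x
  refine b.toBasis.ext fun μ => ?_
  simp only [LinearMap.comp_apply, LinearMap.smul_apply, OrthonormalBasis.coe_toBasis,
    ContinuousLinearMap.coe_coe, LinearEquiv.coe_coe, LinearIsometryEquiv.coe_toLinearEquiv, hb,
    repOp_mk_basisVec ρ hcen' hv, map_smul, hrepr, Opq_single, smul_smul, expPiDiv_mul_stdAddChar]
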